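/- arXiv:1111.6139 — 2 statements merged into one kernel-verified Lean document; each statement's English description precedes it below -/
import Mathlib

section
/- Suppose a second-order linear ODE A·h·y'' + C·y' - N²·D·y = 0 (with A, h, C, D analytic functions and N² a constant) has a solution y = R which is analytic at a point z₀ with h(z₀) = 0, and suppose additionally at z₀ the relation -(A·h'' + B·h' + N²·D)·R'(z₀) - N²·D'·R(z₀) = 0 holds (obtained by differentiating the equation), where C = A'·h - A·h' - B·h. If z₀ is a regular point of the ODE and R is not identically zero, then N²·D(z₀)² = A(z₀)·h'(z₀)·D'(z₀) - (A(z₀)·h''(z₀) + B(z₀)·h'(z₀))·D(z₀). -/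
/-- Lemma 3 of the paper: at a zero `z₀` of `h`, the values of the coefficients of the
Laguerre-type ODE satisfy `N²D² = A h' D' - (A h'' + B h') D`.  All variables denote the
values of the corresponding analytic functions at the regular point `z₀`; `(R, R') ≠ (0,0)`
since `R` is a nonzero analytic solution at the regular point `z₀`. -/
theorem vanVleck_identity_at_zero_of_h
    (A A' B h h' h'' D D' N2 R R' R'' : ℂ)
    (hN : N2 ≠ 0)
    (hzero : h = 0)
    (hODE : A * h * R'' + (A' * h - A * h' - B * h) * R' - N2 * D * R = 0)
    (hODE' : -(A * h'' + B * h' + N2 * D) * R' - N2 * D' * R = 0)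
    (hnontriv : ¬(R = 0 ∧ R' = 0)) :
    N2 * D ^ 2 = A * h' * D' - (A * h'' + B * h') * D := by
  subst hzero
  have e1 : (-(A * h')) * R' + (-(N2 * D)) * R = 0 := by linear_combination hODE
  set a := -(A * h')
  set b := -(N2 * D)
  set c := -(A * h'' + B * h' + N2 * D)
  set d := -(N2 * D')
  have e2 : c * R' + d * R = 0 := by linear_combination hODE'
  have hR : (a * d - b * c) * R = 0 := by linear_combination a * e2 - c * e1
  have hR' : (a * d - b * c) * R' = 0 := by linear_combination d * e1 - b * e2
  have key : a * d - b * c = 0 := by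
    rcases not_and_or.mp hnontriv with hr | hr
    · exact (mul_eq_zero.mp hR).resolve_right hr
    · exact (mul_eq_zero.mp hR').resolve_right hr
  have : N2 * (N2 * D ^ 2 - (A * h' * D' - (A * h'' + B * h') * D)) = 0 := by
    simp only [a, b, c, d] at key; linear_combination -key
  have := (mul_eq_zero.mp this).resolve_left hN
  linear_combination this
end

section
/- Let f be holomorphic in a neighborhood of infinity with f(z) = 1 + O(1/z), let n ∈ ℕ, and let Q_n be a polynomial of degree ≤ n, Q_n ≢ 0, and P_n a polynomial of degree ≤ n such that R_n(z) := Q_n(z)f(z) - P_n(z) = O(z^{-(n+1)}) as z → ∞. If γ is a closed contour in the domain of holomorphy of f such that f is holomorphic outside and on γ (including at ∞) with the above expansion, then for k = 0, 1, …, n-1: ∮_γ t^k Q_n(t) f(t) dt = 0. -/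
open Polynomial Asymptotics Filter

/-!
Write `t^k Q f = t^k (Q f - P) + t^k P`. The polynomial term integrates to zero by Cauchy's
theorem. The remainder `t^k (Q f - P)` is holomorphic on `r ≤ ‖t‖` and, because `k < n`, it is
`o(1/t)` at infinity. Its integral over `C(0, r)` therefore equals its integral over `C(0, R)` for
every `R ≥ r`, and the latter is at most `2πR · o(1/R) → 0`.
-/

open Bornology Metric

section CircleIntegralAtInfinity

variable {E : Type*} [NormedAddCommGroup E] [NormedSpace ℂ E]

theorem tendsto_circleIntegral_atTop_of_isLittleO_inv {g : ℂ → E}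
    (hg : g =o[cobounded ℂ] fun z => z⁻¹) :
    Tendsto (fun R : ℝ => ∮ z in C(0, R), g z) atTop (nhds 0) := by
  rw [NormedAddGroup.tendsto_nhds_zero]
  intro ε hε
  have hδ : 0 < ε / (4 * Real.pi) := by positivity
  obtain ⟨M, -, hM⟩ := (hasBasis_cobounded_norm (E := ℂ)).eventually_iff.mp (hg.def hδ)
  filter_upwards [eventually_ge_atTop (max M 1)] with R hR
  have hR0 : 0 < R := lt_of_lt_of_le one_pos (le_of_max_le_right hR)
  have hsphere : ∀ z ∈ sphere (0 : ℂ) R, ‖g z‖ ≤ ε / (4 * Real.pi) * R⁻¹ := by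
    intro z hz
    rw [mem_sphere_zero_iff_norm] at hz
    have hbound := hM (hz ▸ le_of_max_le_left hR)
    rwa [norm_inv, hz] at hbound
  calc ‖∮ z in C(0, R), g z‖ ≤ 2 * Real.pi * R * (ε / (4 * Real.pi) * R⁻¹) :=
        circleIntegral.norm_integral_le_of_norm_le_const hR0.le hsphere
    _ = ε / 2 := by field_simp; ring
    _ < ε := half_lt_self hε

theorem circleIntegral_eq_of_le_of_differentiableOn {g : ℂ → E} {r R : ℝ} (hr : 0 < r)
    (hrR : r ≤ R) (hg : DifferentiableOn ℂ g {z | r ≤ ‖z‖}) :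
    (∮ z in C(0, R), g z) = ∮ z in C(0, r), g z := by
  refine Complex.circleIntegral_eq_of_differentiable_on_annulus_off_countable hr hrR
    Set.countable_empty (hg.continuousOn.mono ?_) fun z hz => hg.differentiableAt ?_
  · intro z hz
    simpa using hz.2
  · refine mem_of_superset ((isOpen_lt continuous_const continuous_norm).mem_nhds ?_)
      fun w (hw : r < ‖w‖) => hw.le
    simpa using hz.1.2

theorem circleIntegral_eq_zero_of_isLittleO_inv {g : ℂ → E} {r : ℝ} (hr : 0 < r)
    (hd : DifferentiableOn ℂ g {z | r ≤ ‖z‖}) (hg : g =o[cobounded ℂ] fun z => z⁻¹) :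
    (∮ z in C(0, r), g z) = 0 := by
  have hconst :
      Tendsto (fun R : ℝ => ∮ z in C(0, R), g z) atTop (nhds (∮ z in C(0, r), g z)) :=
    tendsto_const_nhds.congr' <| (eventually_ge_atTop r).mono fun R hR =>
      (circleIntegral_eq_of_le_of_differentiableOn hr hR hd).symm
  exact tendsto_nhds_unique hconst (tendsto_circleIntegral_atTop_of_isLittleO_inv hg)

end CircleIntegralAtInfinity

theorem Asymptotics.IsBigO.pow_mul_isLittleO_inv {h : ℂ → ℂ} {k n : ℕ}
    (hh : h =O[cobounded ℂ] fun z => (z ^ (n + 1))⁻¹) (hk : k < n) :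
    (fun z => z ^ k * h z) =o[cobounded ℂ] fun z => z⁻¹ := by
  have hpow : (fun z : ℂ => z ^ (k + 1) * (z⁻¹ * (z ^ (n + 1))⁻¹)) =o[cobounded ℂ]
      fun z => z ^ (n + 1) * (z⁻¹ * (z ^ (n + 1))⁻¹) :=
    (isLittleO_pow_pow_cobounded_of_lt (by omega)).mul_isBigO (isBigO_refl _ _)
  refine (isBigO_refl (fun z : ℂ => z ^ k) _).mul hh |>.trans_isLittleO (hpow.congr' ?_ ?_)
  · filter_upwards [eventually_ne_cobounded 0] with z hz
    field_simp
    ring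
  · filter_upwards [eventually_ne_cobounded 0] with z hz
    field_simp

theorem pade_denominator_orthogonality_general
    (f : ℂ → ℂ) (n : ℕ) (Q P : Polynomial ℂ)
    (r : ℝ) (hr : 0 < r)
    (hf : DifferentiableOn ℂ f {z : ℂ | r ≤ ‖z‖})
    (hR : (fun z : ℂ => Q.eval z * f z - P.eval z) =O[Bornology.cobounded ℂ]
        fun z : ℂ => (z ^ (n + 1))⁻¹) :
    ∀ k : ℕ, k < n → (∮ t in C(0, r), t ^ k * Q.eval t * f t) = 0 := by
  intro k hk
  have hpow : Differentiable ℂ fun t : ℂ => t ^ k := differentiable_pow k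
  have hpoly : Differentiable ℂ fun t => t ^ k * P.eval t := hpow.mul P.differentiable
  have hrem :
      DifferentiableOn ℂ (fun t => t ^ k * (Q.eval t * f t - P.eval t)) {z | r ≤ ‖z‖} :=
    hpow.differentiableOn.mul ((Q.differentiable.differentiableOn.mul hf).sub
      P.differentiable.differentiableOn)
  have hsphere : sphere (0 : ℂ) r ⊆ {z | r ≤ ‖z‖} := fun z hz =>
    (mem_sphere_zero_iff_norm.mp hz).ge
  calc (∮ t in C(0, r), t ^ k * Q.eval t * f t)
      = ∮ t in C(0, r), t ^ k * (Q.eval t * f t - P.eval t) + t ^ k * P.eval t := by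
        congr 1; ext t; ring
    _ = (∮ t in C(0, r), t ^ k * (Q.eval t * f t - P.eval t)) +
          ∮ t in C(0, r), t ^ k * P.eval t :=
        circleIntegral.integral_add ((hrem.continuousOn.mono hsphere).circleIntegrable hr.le)
          (hpoly.continuous.continuousOn.circleIntegrable hr.le)
    _ = 0 := by
      rw [circleIntegral_eq_zero_of_isLittleO_inv hr hrem (hR.pow_mul_isLittleO_inv hk),
        hpoly.diffContOnCl.circleIntegral_eq_zero hr.le, add_zero]

/-- Complex orthogonality of the Padé denominator: if `R_n = Q_n f - P_n = O(z^{-(n+1)})`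
at infinity, then `∮ t^k Q_n(t) f(t) dt = 0` for `k = 0, …, n-1` over a closed contour
(a circle of radius `r`) outside and on which `f` is holomorphic. -/
theorem pade_denominator_orthogonality
    (f : ℂ → ℂ) (n : ℕ) (Q P : Polynomial ℂ)
    (hQdeg : Q.degree ≤ n) (hQ : Q ≠ 0) (hPdeg : P.degree ≤ n)
    (r : ℝ) (hr : 0 < r)
    (hf : DifferentiableOn ℂ f {z : ℂ | r ≤ ‖z‖})
    (hf1 : (fun z : ℂ => f z - 1) =O[Bornology.cobounded ℂ] fun z : ℂ => z⁻¹)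
    (hR : (fun z : ℂ => Q.eval z * f z - P.eval z) =O[Bornology.cobounded ℂ]
        fun z : ℂ => (z ^ (n + 1))⁻¹) :
    ∀ k : ℕ, k < n → (∮ t in C(0, r), t ^ k * Q.eval t * f t) = 0 :=
  pade_denominator_orthogonality_general f n Q P r hr hf hR
end
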